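/- An n×n matrix T over a field K satisfies T = F_n(M)·F_{n−1}(M)⋯F_1(M) for some n×n matrix M over K (i.e., T is induced by a linear SDS with update schedule 1, 2, …, n) if and only if T admits a decomposition T = L·U with L a unit lower triangular matrix (lower triangular with all diagonal entries equal to 1) and U an upper triangular matrix over K. -/
import Mathlib


open Matrix

/-- `sdsF M i` is the matrix that agrees with the identity matrix in every row except
row `i`, whose `i`-th row equals the `i`-th row of `M`. -/
def sdsF {K : Type*} [Field K] {n : ℕ} (M : Matrix (Fin n) (Fin n) K) (i : Fin n) :
    Matrix (Fin n) (Fin n) K :=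
  Matrix.of fun k j => if k = i then M k j else if k = j then 1 else 0

/-- The map of the linear SDS with local matrix `M` and permutation update schedule `π`:
the product `F_{π_n}(M) · F_{π_{n-1}}(M) ⋯ F_{π_1}(M)`. -/
def sdsMap {K : Type*} [Field K] {n : ℕ} (M : Matrix (Fin n) (Fin n) K)
    (π : Equiv.Perm (Fin n)) : Matrix (Fin n) (Fin n) K :=
  (((List.finRange n).reverse).map fun k => sdsF M (π k)).prod

namespace SdsAux

variable {K : Type*} [Field K] {n : ℕ}

/-- The strictly lower triangular part of `M`. -/
def Mlow (M : Matrix (Fin n) (Fin n) K) : Matrix (Fin n) (Fin n) K :=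
  Matrix.of fun i j => if j < i then M i j else 0

/-- The upper triangular part of `M` (including the diagonal). -/
def Mup (M : Matrix (Fin n) (Fin n) K) : Matrix (Fin n) (Fin n) K :=
  Matrix.of fun i j => if i ≤ j then M i j else 0

/-- Partial product `F_k ⋯ F_1`. -/
def g (M : Matrix (Fin n) (Fin n) K) (k : ℕ) : Matrix (Fin n) (Fin n) K :=
  ((((List.finRange n).take k).reverse).map (sdsF M)).prod

lemma g_succ (M : Matrix (Fin n) (Fin n) K) (k : ℕ) (hk : k < n) :
    g M (k+1) = sdsF M ⟨k, hk⟩ * g M k := by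
  unfold g
  rw [List.take_succ]
  have : (List.finRange n)[k]? = some ⟨k, hk⟩ := by
    simp [List.getElem?_eq_getElem, hk]
  rw [this]; simp

lemma sdsF_mul_apply (M A : Matrix (Fin n) (Fin n) K) (c i j : Fin n) :
    (sdsF M c * A) i j = if i = c then ∑ l, M c l * A l j else A i j := by
  by_cases h : i = c
  · subst h; simp [Matrix.mul_apply, sdsF]
  · simp [Matrix.mul_apply, sdsF, h]

lemma invariant (M : Matrix (Fin n) (Fin n) K) (k : ℕ) (hk : k ≤ n) :
    (∀ i : Fin n, k ≤ i.val → ∀ j, g M k i j = (1 : Matrix (Fin n) (Fin n) K) i j) ∧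
    (∀ i : Fin n, i.val < k → ∀ j, g M k i j = (Mlow M * g M k + Mup M) i j) := by
  induction k with
  | zero =>
    exact ⟨fun i _ j => rfl, fun i hi => absurd hi (by omega)⟩
  | succ k ih =>
    have hkn : k < n := hk
    obtain ⟨ih1, ih2⟩ := ih (le_of_lt hkn)
    obtain ⟨c, hcval, hgs⟩ : ∃ c : Fin n, c.val = k ∧ g M (k+1) = sdsF M c * g M k :=
      ⟨⟨k, hkn⟩, rfl, g_succ M k hkn⟩
    have hid : ∀ i : Fin n, k + 1 ≤ i.val → ∀ j,
        g M (k+1) i j = (1 : Matrix (Fin n) (Fin n) K) i j := by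
      intro i hi j
      have hic : i ≠ c := fun h => by rw [h] at hi; omega
      rw [hgs, sdsF_mul_apply, if_neg hic]
      exact ih1 i (by omega) j
    have hne : ∀ i : Fin n, i ≠ c → ∀ j, g M (k+1) i j = g M k i j := by
      intro i hic j
      rw [hgs, sdsF_mul_apply, if_neg hic]
    refine ⟨hid, ?_⟩
    intro i hi j
    by_cases hic : i = c
    · have hik : i.val = k := by rw [hic]; exact hcval
      have hL : g M (k+1) i j = ∑ l, M i l * g M k l j := by
        rw [hgs, sdsF_mul_apply, if_pos hic, ← hic]
      rw [hL]
      simp only [Matrix.add_apply, Matrix.mul_apply]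
      have hsplit : ∀ l : Fin n, M i l * g M k l j =
          (if l < i then M i l else 0) * g M (k+1) l j +
          (if l = j then (if i ≤ j then M i j else 0) else 0) := by
        intro l
        by_cases hl : l < i
        · have hlval : l.val < k := by rw [← hik]; exact hl
          have hlc : l ≠ c := fun h => by rw [h, hcval] at hlval; omega
          rw [if_pos hl, hne l hlc]
          have h0 : (if l = j then (if i ≤ j then M i j else 0) else 0) = 0 := by
            by_cases h1 : l = j
            · subst h1
              have h2 : ¬ i ≤ l := not_le_of_gt hl
              simp [h2]
            · simp [h1]
          rw [h0, add_zero]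
        · have hlk : k ≤ l.val := by
            have := Fin.lt_def.not.mp hl
            omega
          rw [if_neg hl, zero_mul, zero_add, ih1 l hlk j]
          by_cases h1 : l = j
          · subst h1
            have h2 : i ≤ l := le_of_not_gt hl
            simp [Matrix.one_apply, h2]
          · simp [Matrix.one_apply, h1, Ne.symm h1]
      rw [Finset.sum_congr rfl (fun l _ => hsplit l), Finset.sum_add_distrib]
      have h1 : ∀ l : Fin n, (if l < i then M i l else 0) * g M (k+1) l j
          = Mlow M i l * g M (k+1) l j := by intro l; simp [Mlow]
      rw [Finset.sum_congr rfl (fun l _ => h1 l)]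
      congr 1
      simp [Mup]
    · have hik : i.val < k := by
        have : i.val ≠ k := fun h => hic (Fin.ext (h.trans hcval.symm))
        omega
      rw [hne i hic j, ih2 i hik j]
      simp only [Matrix.add_apply, Matrix.mul_apply]
      congr 1
      apply Finset.sum_congr rfl
      intro l _
      by_cases hlc : l = c
      · have h0 : ¬ l < i := by
          rw [Fin.lt_def, hlc, hcval]
          omega
        simp [Mlow, h0]
      · rw [hne l hlc]

lemma g_n_eq (M : Matrix (Fin n) (Fin n) K) : g M n = sdsMap M (Equiv.refl (Fin n)) := by
  unfold g sdsMap
  have h : (List.finRange n).take n = List.finRange n := by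
    rw [List.take_of_length_le (by simp)]
  rw [h]
  simp

/-- Master lemma: `(1 - Mlow M) · sdsMap M = Mup M`. -/
lemma master (M : Matrix (Fin n) (Fin n) K) :
    (1 - Mlow M) * sdsMap M (Equiv.refl (Fin n)) = Mup M := by
  set S := sdsMap M (Equiv.refl (Fin n)) with hS
  have hgn : g M n = S := g_n_eq M
  have hinv := (invariant M n le_rfl).2
  rw [hgn] at hinv
  have hrec : S = Mlow M * S + Mup M := by
    ext i j
    exact hinv i i.isLt j
  rw [sub_mul, one_mul, sub_eq_iff_eq_add]
  rw [add_comm]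
  exact hrec

lemma unit_lower_facts (A : Matrix (Fin n) (Fin n) K)
    (hlow : ∀ i j : Fin n, i < j → A i j = 0) (hdiag : ∀ i, A i i = 1) :
    IsUnit A.det ∧ (∀ i j : Fin n, i < j → A⁻¹ i j = 0) ∧ (∀ i, A⁻¹ i i = 1) := by
  have hbt : A.BlockTriangular OrderDual.toDual := fun i j hij => hlow i j hij
  have hdet : A.det = 1 := by
    rw [Matrix.det_of_lowerTriangular A hbt]
    simp [hdiag]
  have hu : IsUnit A.det := by rw [hdet]; exact isUnit_one
  have hbtT : Aᵀ.BlockTriangular id := fun i j hij => hlow j i hij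
  have huT : IsUnit Aᵀ.det := by rwa [Matrix.det_transpose]
  have : Invertible Aᵀ := Aᵀ.invertibleOfIsUnitDet huT
  have hinvT : (Aᵀ)⁻¹.BlockTriangular id := Matrix.blockTriangular_inv_of_blockTriangular hbtT
  have hinvlow : ∀ i j : Fin n, i < j → A⁻¹ i j = 0 := by
    intro i j hij
    have := hinvT (i := j) (j := i) hij
    rwa [← Matrix.transpose_nonsing_inv, Matrix.transpose_apply] at this
  refine ⟨hu, hinvlow, ?_⟩
  intro i
  have h1 : (A * A⁻¹) i i = 1 := by rw [Matrix.mul_nonsing_inv A hu]; simp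
  rw [Matrix.mul_apply] at h1
  rw [Finset.sum_eq_single i] at h1
  · rwa [hdiag, one_mul] at h1
  · intro l _ hl
    rcases lt_or_gt_of_ne hl with h | h
    · rw [hinvlow l i h, mul_zero]
    · rw [hlow i l h, zero_mul]
  · intro h; exact absurd (Finset.mem_univ i) h

end SdsAux

open SdsAux in
/-- **Corollary (linear SDS ↔ LU decomposition).**
An `n×n` matrix `T` over a field `K` is the map of a linear SDS with update schedule
`1, 2, …, n` (i.e. `T = F_n(M) ⋯ F_1(M)` for some matrix `M`) if and only if `T = L·U`
for some unit lower triangular `L` and upper triangular `U`. -/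
theorem linear_sds_iff_lu {K : Type*} [Field K] {n : ℕ} (hn : 0 < n)
    (T : Matrix (Fin n) (Fin n) K) :
    (∃ M : Matrix (Fin n) (Fin n) K, T = sdsMap M (Equiv.refl (Fin n))) ↔
    ∃ L U : Matrix (Fin n) (Fin n) K,
      (∀ i j : Fin n, i < j → L i j = 0) ∧ (∀ i : Fin n, L i i = 1) ∧
      (∀ i j : Fin n, j < i → U i j = 0) ∧ T = L * U := by
  constructor
  · rintro ⟨M, rfl⟩
    set A : Matrix (Fin n) (Fin n) K := 1 - Mlow M with hA
    have hAlow : ∀ i j : Fin n, i < j → A i j = 0 := by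
      intro i j hij
      have h1 : ¬ j < i := by omega
      simp [hA, Matrix.one_apply, Mlow, Fin.ne_of_lt hij, h1]
    have hAdiag : ∀ i : Fin n, A i i = 1 := by
      intro i
      simp [hA, Matrix.one_apply, Mlow]
    obtain ⟨hu, hinvlow, hinvdiag⟩ := unit_lower_facts A hAlow hAdiag
    refine ⟨A⁻¹, Mup M, hinvlow, hinvdiag, ?_, ?_⟩
    · intro i j hij
      have : ¬ i ≤ j := not_le_of_gt hij
      simp [Mup, this]
    · have hm : A * sdsMap M (Equiv.refl (Fin n)) = Mup M := master M
      rw [← hm, Matrix.nonsing_inv_mul_cancel_left A _ hu]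
  · rintro ⟨L, U, hLlow, hLdiag, hUup, rfl⟩
    obtain ⟨hu, hinvlow, hinvdiag⟩ := unit_lower_facts L hLlow hLdiag
    set M : Matrix (Fin n) (Fin n) K :=
      Matrix.of (fun i j => if j < i then (1 - L⁻¹) i j else U i j) with hM
    have hMlow : Mlow M = 1 - L⁻¹ := by
      ext i j
      by_cases h : j < i
      · simp [Mlow, hM, h]
      · have h0 : (1 - L⁻¹) i j = 0 := by
          rcases lt_trichotomy i j with h1 | h1 | h1
          · simp [Matrix.sub_apply, Matrix.one_apply, Fin.ne_of_lt h1, hinvlow i j h1]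
          · subst h1
            simp [Matrix.sub_apply, Matrix.one_apply, hinvdiag i]
          · exact absurd h1 h
        simp [Mlow, h, h0]
    have hMup : Mup M = U := by
      ext i j
      by_cases h : i ≤ j
      · have h1 : ¬ j < i := not_lt_of_ge h
        simp [Mup, hM, h, h1]
      · have h1 : j < i := lt_of_not_ge h
        simp [Mup, h, hUup i j h1]
    refine ⟨M, ?_⟩
    have hm := master M
    rw [hMlow, hMup, sub_sub_cancel] at hm
    have : L * (L⁻¹ * sdsMap M (Equiv.refl (Fin n))) = L * U := by rw [hm]
    rw [Matrix.mul_nonsing_inv_cancel_left _ _ hu] at this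
    exact this.symm
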